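/- Under the hypotheses of the previous theorem with the additional bound α_k^{-1} ≤ λₙ (i.e., M₁ = λₙ), the gradient components satisfy |g_k^{(i)}| ≤ C̃_i (1 − 1/κ)^k for all k and i, where κ = λₙ/λ₁ is the condition number. -/
import Mathlib

set_option maxHeartbeats 1000000

lemma growth_aux (u c : ℕ → ℝ) (σ : ℝ) (hu : ∀ k, u (k+1) = c k * u k)
    (hc : ∀ k, |c k| ≤ σ) : ∀ a b, |u (a+b)| ≤ σ ^ b * |u a| := by
  intro a b
  induction b with
  | zero => simp
  | succ b ih =>
      have h : |u (a + (b+1))| = |c (a+b)| * |u (a+b)| := by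
        rw [show a+(b+1) = (a+b)+1 from rfl, hu, abs_mul]
      rw [h]
      calc |c (a+b)| * |u (a+b)| ≤ σ * (σ^b * |u a|) :=
            mul_le_mul (hc _) ih (abs_nonneg _) ((abs_nonneg (c (a+b))).trans (hc _))
        _ = σ^(b+1) * |u a| := by ring

lemma component_aux (u c : ℕ → ℝ) (v : ℕ → ℕ) (m : ℕ) (θ σ Δ : ℝ)
    (hθ0 : 0 < θ) (hθ1 : θ ≤ 1) (hσ1 : 1 ≤ σ) (hΔ : 0 ≤ Δ)
    (hv : ∀ k, v k ≤ k ∧ k < v k + m)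
    (hu : ∀ k, u (k+1) = c k * u k) (hc : ∀ k, |c k| ≤ σ)
    (hstep : ∀ k, |c k| ≤ θ ∨ |u (v k)| ≤ Δ * θ ^ (v k)) :
    ∃ C, 0 ≤ C ∧ ∀ k, |u k| ≤ C * θ ^ k := by
  have hσ0 : (0:ℝ) < σ := lt_of_lt_of_le one_pos hσ1
  refine ⟨max |u 0| ((σ/θ)^m * Δ), le_trans (abs_nonneg _) (le_max_left _ _), ?_⟩
  intro k
  induction k with
  | zero => simpa using le_max_left |u 0| ((σ/θ)^m * Δ)
  | succ k ih =>
    rcases hstep k with h | h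
    · calc |u (k+1)| = |c k| * |u k| := by rw [hu, abs_mul]
        _ ≤ θ * (max |u 0| ((σ/θ)^m * Δ) * θ^k) :=
            mul_le_mul h ih (abs_nonneg _) hθ0.le
        _ = max |u 0| ((σ/θ)^m * Δ) * θ^(k+1) := by ring
    · obtain ⟨hv1, hv2⟩ := hv k
      set b := k + 1 - v k with hb
      have hb1 : v k + b = k+1 := by omega
      have hbm : b ≤ m := by omega
      have h2 : |u (k+1)| ≤ σ^b * |u (v k)| := by
        rw [← hb1]; exact growth_aux u c σ hu hc (v k) b
      have hθb : θ^m ≤ θ^b := pow_le_pow_of_le_one hθ0.le hθ1 hbm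
      have key : σ^m * (Δ * θ^(v k)) ≤ (σ/θ)^m * Δ * θ^(k+1) := by
        rw [div_pow, div_mul_eq_mul_div, div_mul_eq_mul_div, le_div_iff₀ (pow_pos hθ0 m)]
        have he : θ^(k+1) = θ^(v k) * θ^b := by rw [← pow_add, hb1]
        rw [he]
        calc σ^m * (Δ * θ^(v k)) * θ^m ≤ σ^m * (Δ * θ^(v k)) * θ^b := by
              apply mul_le_mul_of_nonneg_left hθb
              positivity
          _ = σ^m * Δ * (θ^(v k) * θ^b) := by ring
      calc |u (k+1)| ≤ σ^b * (Δ * θ^(v k)) :=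
            le_trans h2 (mul_le_mul_of_nonneg_left h (pow_nonneg hσ0.le b))
        _ ≤ σ^m * (Δ * θ^(v k)) := by
            apply mul_le_mul_of_nonneg_right (pow_le_pow_right₀ hσ1 hbm)
            positivity
        _ ≤ (σ/θ)^m * Δ * θ^(k+1) := key
        _ ≤ max |u 0| ((σ/θ)^m * Δ) * θ^(k+1) :=
            mul_le_mul_of_nonneg_right (le_max_right _ _) (pow_nonneg hθ0.le _)

/-- Theorem 2: under Property B with the additional bound `α_k⁻¹ ≤ λₙ`, the gradient
components either vanish in finitely many steps or converge R-linearly at rate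
`1 − 1/κ` with `κ = λₙ/λ₁`. -/
theorem stmt10 {n : ℕ} (hn : 0 < n) (lam : Fin n → ℝ)
    (hpos : ∀ i, 0 < lam i) (hmono : StrictMono lam)
    (b : Fin n → ℝ) (m : ℕ) (hm : 1 ≤ m)
    (ψ : ℝ → ℝ)
    (hψ : ∀ z ∈ Set.Icc (lam ⟨0, hn⟩) (lam ⟨n - 1, by omega⟩), 0 < ψ z)
    (x : ℕ → Fin n → ℝ) (g : ℕ → Fin n → ℝ) (α : ℕ → ℝ)
    (hg : ∀ k i, g k i = lam i * x k i - b i)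
    (hstep : ∀ k i, x (k + 1) i = x k i - α k * g k i)
    (hαpos : ∀ k, 0 < α k)
    (hα1 : ∀ k, lam ⟨0, hn⟩ ≤ (α k)⁻¹ ∧ (α k)⁻¹ ≤ lam ⟨n - 1, by omega⟩)
    (v : ℕ → ℕ) (hv : ∀ k, v k ≤ k ∧ k < v k + m)
    (hα2 : ∀ k, g (v k) ≠ 0 → α k ≤
      (∑ i, ψ (lam i) * (g (v k) i) ^ 2) / (∑ i, lam i * ψ (lam i) * (g (v k) i) ^ 2)) :
    (∃ k, g k = 0) ∨
      ∀ i, ∃ C : ℝ, 0 ≤ C ∧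
        ∀ k, |g k i| ≤ C * (1 - 1 / (lam ⟨n - 1, by omega⟩ / lam ⟨0, hn⟩)) ^ k := by
  classical
  have i0 : Fin n := ⟨0, hn⟩
  have hN : n - 1 < n := by omega
  -- gradient recursion
  have grec : ∀ k i, g (k+1) i = (1 - α k * lam i) * g k i := by
    intro k i
    simp only [hg, hstep]
    ring
  by_cases hzero : ∃ k, g k = 0
  · exact Or.inl hzero
  by_cases hn1 : n = 1
  · -- with n = 1 the gradient vanishes after one step, contradiction
    exfalso
    push_neg at hzero
    refine hzero 1 ?_
    funext j
    subst hn1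
    have hj : j = ⟨0, hn⟩ := Subsingleton.elim _ _
    have hα := hα1 0
    have heq : (α 0)⁻¹ = lam ⟨0, hn⟩ := le_antisymm hα.2 hα.1
    have hαv : α 0 = (lam ⟨0, hn⟩)⁻¹ := by
      rw [← heq, inv_inv]
    have : g 1 j = (1 - α 0 * lam j) * g 0 j := grec 0 j
    rw [this, hj, hαv, inv_mul_cancel₀ (ne_of_gt (hpos _))]
    simp
  push_neg at hzero
  right
  -- abbreviations
  set lo := lam ⟨0, hn⟩ with hlo
  set hi := lam ⟨n - 1, hN⟩ with hhi
  have hL0 : 0 < lo := hpos _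
  have hLN : lo < hi := by
    apply hmono
    simp only [Fin.lt_def]
    omega
  have hhi0 : 0 < hi := hL0.trans hLN
  set θ := 1 - lo / hi with hθdef
  have hθ0 : 0 < θ := by
    have : lo / hi < 1 := (div_lt_one hhi0).mpr hLN
    simp only [hθdef]; linarith
  have hθ1 : θ ≤ 1 := by
    have : 0 < lo / hi := div_pos hL0 hhi0
    simp only [hθdef]; linarith
  set σ := hi / lo with hσdef
  have hσ1 : 1 ≤ σ := (one_le_div hL0).mpr hLN.le
  have hlow : ∀ j, lo ≤ lam j := fun j => hmono.monotone (by simp [Fin.le_def])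
  have hhigh : ∀ j, lam j ≤ hi := fun j => by
    apply hmono.monotone
    simp only [Fin.le_def]
    omega
  -- ψ values
  set p : Fin n → ℝ := fun j => ψ (lam j) with hpdef
  have hp : ∀ j, 0 < p j := fun j => hψ (lam j) ⟨hlow j, hhigh j⟩
  have hinst : Nonempty (Fin n) := ⟨⟨0, hn⟩⟩
  set Pm := ∑ j, p j with hPmdef
  have hPm : 0 < Pm := Finset.sum_pos (fun j _ => hp j) Finset.univ_nonempty
  have hpj : ∀ j, p j ≤ Pm := fun j =>
    Finset.single_le_sum (fun j _ => (hp j).le) (Finset.mem_univ j)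
  -- stepsize bounds
  have hαl : ∀ k, α k ≤ lo⁻¹ := by
    intro k
    have h := (hα1 k).1
    calc α k = ((α k)⁻¹)⁻¹ := (inv_inv _).symm
      _ ≤ lo⁻¹ := by
          apply inv_anti₀ hL0 h
  have hαu : ∀ k, hi⁻¹ ≤ α k := by
    intro k
    have h := (hα1 k).2
    calc hi⁻¹ ≤ ((α k)⁻¹)⁻¹ := inv_anti₀ (inv_pos.mpr (hαpos k)) h
      _ = α k := inv_inv _
  -- global growth bound on the multipliers
  have hc_glob : ∀ k i, |1 - α k * lam i| ≤ σ := by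
    intro k i
    have h1 : α k * lam i ≤ lo⁻¹ * hi :=
      mul_le_mul (hαl k) (hhigh i) (hpos i).le (inv_nonneg.mpr hL0.le)
    have h2 : lo⁻¹ * hi = σ := (div_eq_inv_mul _ _).symm
    have h3 : 0 < α k * lam i := mul_pos (hαpos k) (hpos i)
    rw [abs_le]
    constructor <;> nlinarith
  -- lower bound on α_k * lam i
  have halow : ∀ k i, lo / hi ≤ α k * lam i := by
    intro k i
    have h1 : hi⁻¹ * lo ≤ α k * lam i :=
      mul_le_mul (hαu k) (hlow i) hL0.le (hαpos k).le
    calc lo / hi = hi⁻¹ * lo := div_eq_inv_mul _ _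
      _ ≤ α k * lam i := h1
  -- main component induction
  have main : ∀ N : ℕ, ∀ i : Fin n, (i : ℕ) < N →
      ∃ C, 0 ≤ C ∧ ∀ k, |g k i| ≤ C * θ ^ k := by
    intro N
    induction N with
    | zero => intro i h; omega
    | succ N ih =>
      intro i hiN
      -- common constant for earlier components
      have hprev : ∀ j : Fin n, ∃ C, 0 ≤ C ∧ ∀ k, j < i → |g k j| ≤ C * θ ^ k := by
        intro j
        by_cases hj : j < i
        · obtain ⟨C, hC0, hC⟩ := ih j (by have := Fin.lt_def.mp hj; omega)
          exact ⟨C, hC0, fun k _ => hC k⟩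
        · exact ⟨0, le_refl 0, fun k h => absurd h hj⟩
      choose Cf hCf0 hCf using hprev
      set C' := ∑ j, Cf j with hC'def
      have hC'0 : 0 ≤ C' := Finset.sum_nonneg (fun j _ => hCf0 j)
      have hC' : ∀ (j : Fin n) (k : ℕ), j < i → |g k j| ≤ C' * θ ^ k := by
        intro j k hj
        refine (hCf j k hj).trans ?_
        exact mul_le_mul_of_nonneg_right
          (Finset.single_le_sum (fun j _ => hCf0 j) (Finset.mem_univ j))
          (pow_nonneg hθ0.le k)
      set Δ := Real.sqrt ((n : ℝ) * Pm * C'^2 / (θ * p i)) with hΔdef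
      have hΔ0 : 0 ≤ Δ := Real.sqrt_nonneg _
      have hΔsq : Δ^2 = (n : ℝ) * Pm * C'^2 / (θ * p i) := by
        rw [hΔdef, Real.sq_sqrt]
        exact div_nonneg
          (mul_nonneg (mul_nonneg (Nat.cast_nonneg n) hPm.le) (sq_nonneg C'))
          (mul_pos hθ0 (hp i)).le
      -- the dichotomy
      have hdich : ∀ k, |1 - α k * lam i| ≤ θ ∨ |g (v k) i| ≤ Δ * θ ^ (v k) := by
        intro k
        set w := g (v k) with hw
        set S1 := ∑ j ∈ Finset.univ.filter (fun j => j < i), p j * (w j)^2 with hS1def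
        by_cases hB : w i ≠ 0 ∧ S1 ≤ θ * (p i * (w i)^2)
        · left
          set S2 := ∑ j ∈ Finset.univ.filter (fun j => ¬ j < i), p j * (w j)^2 with hS2def
          have hsplit : (∑ j, p j * (w j)^2) = S1 + S2 :=
            (Finset.sum_filter_add_sum_filter_not Finset.univ _ _).symm
          have hS2mem : i ∈ Finset.univ.filter (fun j => ¬ j < i) := by
            simp
          have hS2 : p i * (w i)^2 ≤ S2 :=
            Finset.single_le_sum (fun j _ => mul_nonneg (hp j).le (sq_nonneg _)) hS2mem
          have hwi : 0 < (w i)^2 := (sq_nonneg _).lt_of_ne (Ne.symm (pow_ne_zero 2 hB.1))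
          have hS2pos : 0 < S2 := lt_of_lt_of_le (mul_pos (hp i) hwi) hS2
          -- T2 bound
          have hT2 : lam i * S2 ≤ ∑ j, lam j * p j * (w j)^2 := by
            rw [← Finset.sum_filter_add_sum_filter_not Finset.univ (fun j => ¬ j < i)
              (fun j => lam j * p j * (w j)^2)]
            have h1 : lam i * S2 ≤
                ∑ j ∈ Finset.univ.filter (fun j => ¬ j < i), lam j * p j * (w j)^2 := by
              rw [hS2def, Finset.mul_sum]
              apply Finset.sum_le_sum
              intro j hj
              have hij : i ≤ j := not_lt.mp (Finset.mem_filter.mp hj).2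
              have hlam : lam i ≤ lam j := hmono.monotone hij
              calc lam i * (p j * (w j)^2) ≤ lam j * (p j * (w j)^2) :=
                    mul_le_mul_of_nonneg_right hlam (mul_nonneg (hp j).le (sq_nonneg _))
                _ = lam j * p j * (w j)^2 := by ring
            have h2 : 0 ≤ ∑ j ∈ Finset.univ.filter (fun j => ¬ ¬ j < i),
                lam j * p j * (w j)^2 := by
              apply Finset.sum_nonneg
              intro j _
              exact mul_nonneg (mul_nonneg (hpos j).le (hp j).le) (sq_nonneg _)
            linarith
          have hT2pos : 0 < ∑ j, lam j * p j * (w j)^2 :=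
            lt_of_lt_of_le (mul_pos (hpos i) hS2pos) hT2
          have hT1 : (∑ j, p j * (w j)^2) ≤ (1 + θ) * S2 := by
            have h4 : θ * (p i * (w i)^2) ≤ θ * S2 :=
              mul_le_mul_of_nonneg_left hS2 hθ0.le
            rw [hsplit]
            nlinarith [hB.2]
          have hαk := hα2 k (hzero (v k))
          have hfrac : (∑ j, p j * (w j)^2) / (∑ j, lam j * p j * (w j)^2)
              ≤ (1 + θ) / lam i := by
            rw [div_le_div_iff₀ hT2pos (hpos i)]
            calc (∑ j, p j * (w j)^2) * lam i ≤ ((1+θ) * S2) * lam i :=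
                  mul_le_mul_of_nonneg_right hT1 (hpos i).le
              _ = (1+θ) * (lam i * S2) := by ring
              _ ≤ (1+θ) * ∑ j, lam j * p j * (w j)^2 :=
                  mul_le_mul_of_nonneg_left hT2 (by linarith)
          have hαfrac : α k ≤ (1 + θ) / lam i := le_trans hαk hfrac
          have haL : α k * lam i ≤ 1 + θ := by
            rw [← le_div_iff₀ (hpos i)]
            exact hαfrac
          have hlow2 := halow k i
          rw [abs_le]
          constructor
          · linarith
          · simp only [hθdef]; linarith
        · right
          by_cases hwi : w i = 0
          · rw [hwi]
            simpa using mul_nonneg hΔ0 (pow_nonneg hθ0.le _)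
          · have h1 : θ * (p i * (w i)^2) < S1 := by
              by_contra hcon
              push_neg at hcon
              exact hB ⟨hwi, hcon⟩
            have hS1le : S1 ≤ (n : ℝ) * (Pm * (C' * θ ^ (v k))^2) := by
              have hterm : ∀ j ∈ Finset.univ.filter (fun j => j < i),
                  p j * (w j)^2 ≤ Pm * (C' * θ ^ (v k))^2 := by
                intro j hj
                have hji : j < i := (Finset.mem_filter.mp hj).2
                have hgj : |w j| ≤ C' * θ ^ (v k) := hC' j (v k) hji
                have h2 : (w j)^2 ≤ (C' * θ ^ (v k))^2 := by
                  rw [← sq_abs]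
                  exact pow_le_pow_left₀ (abs_nonneg _) hgj 2
                have := hpj j
                nlinarith [hp j, sq_nonneg (w j)]
              have hcard : ((Finset.univ.filter (fun j => j < i)).card : ℝ) ≤ (n : ℝ) := by
                have h5 : (Finset.univ.filter (fun j => j < i)).card ≤ n :=
                  le_trans (Finset.card_filter_le _ _) (by simp)
                exact_mod_cast h5
              have h0 := Finset.sum_le_card_nsmul (Finset.univ.filter (fun j => j < i))
                (fun j => p j * (w j)^2) (Pm * (C' * θ ^ (v k))^2) hterm
              rw [nsmul_eq_mul] at h0
              refine h0.trans ?_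
              exact mul_le_mul_of_nonneg_right hcard (by positivity)
            have hsq : (w i)^2 ≤ (Δ * θ ^ (v k))^2 := by
              have hrw : (Δ * θ ^ (v k))^2 = (n : ℝ) * (Pm * (C' * θ ^ (v k))^2) / (θ * p i) := by
                rw [mul_pow, hΔsq]
                field_simp
              rw [hrw]
              rw [le_div_iff₀ (mul_pos hθ0 (hp i))]
              nlinarith
            calc |w i| = Real.sqrt ((w i)^2) := (Real.sqrt_sq_eq_abs _).symm
              _ ≤ Real.sqrt ((Δ * θ ^ (v k))^2) := Real.sqrt_le_sqrt hsq
              _ = Δ * θ ^ (v k) := Real.sqrt_sq (mul_nonneg hΔ0 (pow_nonneg hθ0.le _))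
      obtain ⟨C, hC0, hCb⟩ := component_aux (fun k => g k i) (fun k => 1 - α k * lam i)
        v m θ σ Δ hθ0 hθ1 hσ1 hΔ0 hv (fun k => grec k i) (fun k => hc_glob k i) hdich
      exact ⟨C, hC0, hCb⟩
  intro i
  obtain ⟨C, hC0, hCb⟩ := main ((i : ℕ) + 1) i (Nat.lt_succ_self _)
  refine ⟨C, hC0, fun k => ?_⟩
  show |g k i| ≤ C * (1 - 1 / (hi / lo)) ^ k
  rw [one_div_div]
  exact hCb k
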